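/- For every x ∈ ℕ^d and every j ∈ [d], the weight satisfies W(g_j(x)) = W(x) + j − 1. -/

import Mathlib

/-!
Encode the point `(i, n)` as `n * d + i`: heights are then ordered as natural numbers and
`δ + s/d` becomes `δ + s`. In this encoding `W(x) = ∑_{p, q} ⌊(q - p) / d⌋` over pairs of points,
and `g_j` replaces each upper point `δ^k(x)`, `k ≥ j`, by the next point of the spiral
`T = {q | q % d ∈ S}`, where `S` is the set of seats of the upper points. On `T` this move is
monotone and commutes with `+ d`, so pairs of upper points keep their contributions, and a lower
point lies below every upper point, so only the pairs (lower `p`, upper `q`) change. For a fixed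
lower `p`, the move permutes the seats of the upper points and exactly one of them (the last
seat of `S`) wraps around to the next level, so `∑_q ⌊(q - p) / d⌋` grows by exactly one.
-/

namespace Spiral

/-- The size `n(x) = n₁ + ⋯ + n_d` of a configuration `x ∈ ℕ^d`. -/
def size {d : ℕ} (x : Fin d → ℕ) : ℕ := ∑ i, x i

/-- The weight `W(x) = Σ_{i<j} (max(0, x_j − x_i) + max(0, x_i − x_j − 1))`
(truncated ℕ-subtraction realizes the `max(0,·)`). -/
def weight {d : ℕ} (x : Fin d → ℕ) : ℕ :=
  ∑ i : Fin d, ∑ j : Fin d, if i < j then (x j - x i) + (x i - x j - 1) else 0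

/-- The configuration `x` as a set of points of `[d] × ℕ`: the point `(i, n)` (seat `i`
0-indexed, level `n`) is encoded as the natural number `n*d + i`. The usual order on the
encodings is exactly the height order `≺` (height `h(i,n) = n + i/d`), and the spiral
shift `δ + s/d` is encoded as `+ s`. -/
def pts (d : ℕ) (x : Fin d → ℕ) : Finset ℕ :=
  Finset.image (fun i : Fin d => x i * d + i.val) Finset.univ

/-- The points of `x` listed in increasing height order: `δ¹(x), …, δ^d(x)`. -/
def sortedPts (d : ℕ) (x : Fin d → ℕ) : List ℕ :=
  (pts d x).sort (· ≤ ·)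

/-- The lowest point strictly above `p` (along the spiral) whose seat lies in `S`. -/
noncomputable def nextPt (d : ℕ) (S : Finset ℕ) (p : ℕ) : ℕ :=
  sInf {q : ℕ | p < q ∧ q % d ∈ S}

/-- The spiral shifting operator `g_j` (for `1 ≤ j ≤ d`): it fixes the lowest `j - 1`
points `δ¹(x), …, δ^{j-1}(x)` and moves each remaining point `δ^k(x)` (`k ≥ j`) to
`δ^k(x) + s_k/d`, where `s_k` is the minimal positive integer such that the seat of
`δ^k(x) + s_k/d` lies in `{i(δ^j(x)), …, i(δ^d(x))}`. The resulting configuration is read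
off from the new point set (which has exactly one point per seat). -/
noncomputable def gOp (d : ℕ) (j : ℕ) (x : Fin d → ℕ) : Fin d → ℕ := fun i =>
  let L := sortedPts d x
  let low := L.take (j - 1)
  let high := L.drop (j - 1)
  let S : Finset ℕ := high.toFinset.image (· % d)
  let Q : Finset ℕ := low.toFinset ∪ (high.map (nextPt d S)).toFinset
  ∑ q ∈ Q.filter (fun q => q % d = i.val), q / d

/-- `g^a := g₁^{a₁} ∘ ⋯ ∘ g_d^{a_d}` (here `a i` is the exponent of `g_{i+1}`). -/
noncomputable def gIter (d : ℕ) (a : Fin d → ℕ) (x : Fin d → ℕ) : Fin d → ℕ :=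
  (List.finRange d).foldr (fun j y => (gOp d (j.val + 1))^[a j] y) x

end Spiral

namespace Spiral

open Finset

section Arithmetic

variable {d : ℕ}

theorem sub_div_add_div_add_ite {p q : ℕ} (hd : 0 < d) (hpq : p ≤ q) :
    (q - p) / d + p / d + (if q % d < p % d then 1 else 0) = q / d := by
  have hmod : q % d = ((q - p) % d + p % d) % d := by
    rw [← Nat.add_mod, Nat.sub_add_cancel hpq]
  have hu := Nat.mod_lt (q - p) hd
  have hv := Nat.mod_lt p hd
  have hsum : q / d = (q - p) / d + p / d + if d ≤ (q - p) % d + p % d then 1 else 0 := by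
    rw [← Nat.add_div hd, Nat.sub_add_cancel hpq]
  rw [hsum]
  by_cases hwrap : d ≤ (q - p) % d + p % d
  · have hlt : (q - p) % d + p % d - d < d := by omega
    rw [Nat.mod_eq_sub_mod hwrap, Nat.mod_eq_of_lt hlt] at hmod
    simp only [hwrap, if_true, show q % d < p % d by omega]
  · have hlt : (q - p) % d + p % d < d := by omega
    rw [Nat.mod_eq_of_lt hlt] at hmod
    simp only [hwrap, if_false, show ¬q % d < p % d by omega]

theorem mul_add_sub_mul_add_div {a b i k : ℕ} (hi : i < d) (hk : k < d) :
    (a * d + k - (b * d + i)) / d = a - b - if k < i then 1 else 0 := by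
  have hd : 0 < d := by omega
  have hdiv {n r : ℕ} (hr : r < d) : (n * d + r) / d = n := by
    rw [mul_comm, Nat.mul_add_div hd, Nat.div_eq_of_lt hr, add_zero]
  rcases le_or_gt (b * d + i) (a * d + k) with hle | hlt
  · have h := sub_div_add_div_add_ite hd hle
    rw [hdiv hk, hdiv hi, Nat.mul_add_mod_of_lt hk, Nat.mul_add_mod_of_lt hi] at h
    generalize (a * d + k - (b * d + i)) / d = m at h ⊢
    split_ifs at h ⊢ <;> omega
  · have hab : a ≤ b := by
      by_contra! hba
      have := Nat.mul_le_mul_right d hba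
      rw [Nat.succ_mul] at this
      omega
    rw [Nat.sub_eq_zero_of_le hlt.le, Nat.zero_div]
    split_ifs <;> omega

theorem sub_div_eq_sub_div_of_forall {p q p' q' : ℕ}
    (h : ∀ t, p + t * d ≤ q ↔ p' + t * d ≤ q') : (q - p) / d = (q' - p') / d := by
  rcases Nat.eq_zero_or_pos d with rfl | hd
  · simp
  have h0 := h 0
  refine eq_of_forall_le_iff fun t => ?_
  rw [Nat.le_div_iff_mul_le hd, Nat.le_div_iff_mul_le hd]
  have ht := h t
  simp only [zero_mul, add_zero] at h0
  omega

end Arithmetic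

theorem sum_sum_eq_sum_sum_ite_lt {ι M : Type*} [Fintype ι] [LinearOrder ι] [AddCommMonoid M]
    (F : ι → ι → M) (hF : ∀ i, F i i = 0) :
    ∑ i, ∑ k, F i k = ∑ i, ∑ k, if i < k then F i k + F k i else 0 := by
  have hsplit : ∀ i k, F i k = (if i < k then F i k else 0) + if k < i then F i k else 0 := by
    intro i k
    rcases lt_trichotomy i k with h | rfl | h
    · simp [h, h.not_gt]
    · simp [hF]
    · simp [h, h.not_gt]
  calc ∑ i, ∑ k, F i k
      = ∑ i, ∑ k, (if i < k then F i k else 0) + ∑ i, ∑ k, if k < i then F i k else 0 := by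
        simp only [← sum_add_distrib, ← hsplit]
    _ = ∑ i, ∑ k, (if i < k then F i k else 0) + ∑ i, ∑ k, if i < k then F k i else 0 := by
        rw [sum_comm (f := fun i k => if k < i then F i k else 0)]
    _ = ∑ i, ∑ k, if i < k then F i k + F k i else 0 := by
        simp only [← sum_add_distrib, ite_add_ite, add_zero]

/-- A pair `p ≺ q` contributes the number of complete turns of the spiral from `p` to `q`;
pairs with `q ≼ p` contribute `0` through truncated subtraction. -/
def ptWeight (d : ℕ) (P : Finset ℕ) : ℕ :=
  ∑ p ∈ P, ∑ q ∈ P, (q - p) / d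

section Points

variable {d : ℕ}

theorem encode_mod (y : Fin d → ℕ) (i : Fin d) : (y i * d + i) % d = i :=
  Nat.mul_add_mod_of_lt i.isLt

theorem encode_injective (y : Fin d → ℕ) : Function.Injective fun i : Fin d => y i * d + i :=
  fun i k h => Fin.ext (by rw [← encode_mod y i, ← encode_mod y k]; exact congrArg (· % d) h)

theorem card_pts (y : Fin d → ℕ) : (pts d y).card = d := by
  rw [pts, card_image_of_injective _ (encode_injective y), card_univ, Fintype.card_fin]

theorem mod_injOn_pts (y : Fin d → ℕ) : Set.InjOn (· % d) (pts d y) := by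
  rintro _ hp _ hq h
  obtain ⟨i, -, rfl⟩ := mem_image.1 hp
  obtain ⟨k, -, rfl⟩ := mem_image.1 hq
  simp only [encode_mod] at h
  rw [Fin.ext h]

theorem weight_eq_ptWeight (y : Fin d → ℕ) : weight y = ptWeight d (pts d y) := by
  simp only [ptWeight, pts, sum_image fun _ _ _ _ h => encode_injective y h]
  rw [sum_sum_eq_sum_sum_ite_lt _ fun i => by simp, weight]
  refine sum_congr rfl fun i _ => sum_congr rfl fun k _ => ?_
  split_ifs with hik
  · rw [mul_add_sub_mul_add_div i.isLt k.isLt, mul_add_sub_mul_add_div k.isLt i.isLt,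
      if_neg (Fin.lt_def.not.1 hik.not_gt), if_pos (Fin.lt_def.1 hik), Nat.sub_zero]
  · rfl

def ofPts (d : ℕ) (Q : Finset ℕ) : Fin d → ℕ :=
  fun i => ∑ q ∈ Q.filter (fun q => q % d = i.val), q / d

theorem pts_ofPts {Q : Finset ℕ} (hd : 0 < d) (hQ : Set.InjOn (· % d) Q) (hcard : d ≤ Q.card) :
    pts d (ofPts d Q) = Q := by
  refine (eq_of_subset_of_card_le (fun q hq => ?_) ?_).symm
  · have hfilter : Q.filter (fun q' => q' % d = q % d) = {q} := by
      ext q'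
      simp only [mem_filter, mem_singleton]
      exact ⟨fun h => hQ h.1 hq h.2, by rintro rfl; exact ⟨hq, rfl⟩⟩
    refine mem_image.2 ⟨⟨q % d, Nat.mod_lt q hd⟩, mem_univ _, ?_⟩
    simp only [ofPts, hfilter, sum_singleton, Nat.div_add_mod']
  · exact card_image_le.trans (by rw [card_univ, Fintype.card_fin]; exact hcard)

end Points

section NextPt

variable {d : ℕ} {S : Finset ℕ}

theorem nextPt_le {p q : ℕ} (hpq : p < q) (hq : q % d ∈ S) : nextPt d S p ≤ q :=
  Nat.sInf_le ⟨hpq, hq⟩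

variable (hS : ∃ r ∈ S, r < d)
include hS

theorem lt_nextPt_and_mod_mem (p : ℕ) : p < nextPt d S p ∧ nextPt d S p % d ∈ S := by
  obtain ⟨r, hr, hrd⟩ := hS
  refine Nat.sInf_mem (s := {q | p < q ∧ q % d ∈ S}) ⟨r + (p + 1) * d, ?_, ?_⟩
  · nlinarith
  · rwa [Nat.add_mul_mod_self_right, Nat.mod_eq_of_lt hrd]

theorem lt_nextPt (p : ℕ) : p < nextPt d S p := (lt_nextPt_and_mod_mem hS p).1

theorem nextPt_mod_mem (p : ℕ) : nextPt d S p % d ∈ S := (lt_nextPt_and_mod_mem hS p).2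

theorem nextPt_mono : Monotone (nextPt d S) :=
  fun _ q hpq => nextPt_le (hpq.trans_lt (lt_nextPt hS q)) (nextPt_mod_mem hS q)

theorem nextPt_lt_nextPt {p q : ℕ} (hpq : p < q) (hq : q % d ∈ S) :
    nextPt d S p < nextPt d S q :=
  (nextPt_le hpq hq).trans_lt (lt_nextPt hS q)

theorem nextPt_le_nextPt_iff {p q : ℕ} (hp : p % d ∈ S) :
    nextPt d S p ≤ nextPt d S q ↔ p ≤ q :=
  ⟨fun h => not_lt.1 fun hqp => (nextPt_lt_nextPt hS hqp hp).not_ge h, fun h => nextPt_mono hS h⟩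

theorem nextPt_add_mul (p k : ℕ) : nextPt d S (p + k * d) = nextPt d S p + k * d := by
  have hlt := lt_nextPt hS (p + k * d)
  refine le_antisymm (nextPt_le ?_ ?_) ?_
  · have := lt_nextPt hS p
    omega
  · rw [Nat.add_mul_mod_self_right]
    exact nextPt_mod_mem hS p
  · have h : nextPt d S p ≤ nextPt d S (p + k * d) - k * d := by
      refine nextPt_le (by omega) ?_
      rw [mul_comm, Nat.sub_mul_mod (by rw [mul_comm]; omega)]
      exact nextPt_mod_mem hS _
    omega

theorem nextPt_eq_nextPt_mod_add (p : ℕ) : nextPt d S p = nextPt d S (p % d) + p / d * d := by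
  conv_lhs => rw [← Nat.mod_add_div' p d]
  exact nextPt_add_mul hS _ _

theorem nextPt_mod (p : ℕ) : nextPt d S p % d = nextPt d S (p % d) % d := by
  rw [nextPt_eq_nextPt_mod_add hS p, Nat.add_mul_mod_self_right]

/-- On the spiral `{q | q % d ∈ S}` the move commutes with `+ d` and preserves order, so it
does not change the number of complete turns from a point of the spiral to any later point. -/
theorem nextPt_sub_nextPt_div {p q : ℕ} (hp : p % d ∈ S) :
    (nextPt d S q - nextPt d S p) / d = (q - p) / d := by
  refine (sub_div_eq_sub_div_of_forall fun t => ?_).symm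
  rw [← nextPt_add_mul hS, nextPt_le_nextPt_iff hS (by rwa [Nat.add_mul_mod_self_right])]

theorem nextPt_mod_ne_of_lt {r r' : ℕ} (hr : r ∈ S) (hr' : r' ∈ S) (hrr' : r < r')
    (hr'd : r' < d) :
    nextPt d S r % d ≠ nextPt d S r' % d := by
  have hrd : r < d := hrr'.trans hr'd
  have h1 : nextPt d S r ≤ r' := nextPt_le hrr' (by rwa [Nat.mod_eq_of_lt hr'd])
  have h2 : nextPt d S r' ≤ r + d :=
    nextPt_le (by omega) (by rwa [Nat.add_mod_right, Nat.mod_eq_of_lt hrd])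
  have h3 := lt_nextPt hS r
  have h4 := lt_nextPt hS r'
  intro h
  have hzero := Nat.sub_mod_eq_zero_of_mod_eq h.symm
  rw [Nat.mod_eq_of_lt (by omega)] at hzero
  omega

end NextPt

section Seats

variable {d : ℕ} {S : Finset ℕ}

theorem nextPt_mod_injOn (hS : ∀ r ∈ S, r < d) : Set.InjOn (fun r => nextPt d S r % d) S := by
  intro r hr r' hr' h
  have hS' : ∃ r ∈ S, r < d := ⟨r, hr, hS r hr⟩
  rcases lt_trichotomy r r' with hlt | heq | hlt
  · exact absurd h (nextPt_mod_ne_of_lt hS' hr hr' hlt (hS r' hr'))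
  · exact heq
  · exact absurd h.symm (nextPt_mod_ne_of_lt hS' hr' hr hlt (hS r hr))

theorem image_nextPt_mod (hS : ∀ r ∈ S, r < d) : S.image (fun r => nextPt d S r % d) = S := by
  rcases S.eq_empty_or_nonempty with rfl | ⟨r, hr⟩
  · rfl
  refine eq_of_subset_of_card_le (fun _ h => ?_) (card_image_of_injOn (nextPt_mod_injOn hS)).ge
  obtain ⟨r', -, rfl⟩ := mem_image.1 h
  exact nextPt_mod_mem ⟨r, hr, hS r hr⟩ r'

/-- Only the last seat of `S` wraps around to the next level. -/
theorem sum_nextPt_div_eq_one (hS : ∀ r ∈ S, r < d) (hne : S.Nonempty) :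
    ∑ r ∈ S, nextPt d S r / d = 1 := by
  have hS' : ∃ r ∈ S, r < d := ⟨_, hne.choose_spec, hS _ hne.choose_spec⟩
  have hwrap : ∀ r ∈ S, nextPt d S r / d = if r = S.max' hne then 1 else 0 := by
    intro r hr
    have hrd := hS r hr
    have hup : nextPt d S r ≤ r + d :=
      nextPt_le (by omega) (by rwa [Nat.add_mod_right, Nat.mod_eq_of_lt hrd])
    have hlt := lt_nextPt hS' r
    have hmax := S.le_max' r hr
    split_ifs with hrm
    · refine Nat.div_eq_of_lt_le ?_ (by omega)
      by_contra! hlow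
      have hmem := nextPt_mod_mem hS' r
      rw [Nat.mod_eq_of_lt (by omega)] at hmem
      have := S.le_max' _ hmem
      omega
    · refine Nat.div_eq_of_lt ((nextPt_le (lt_of_le_of_ne hmax hrm) ?_).trans_lt ?_)
      · rw [Nat.mod_eq_of_lt (hS _ (S.max'_mem hne))]
        exact S.max'_mem hne
      · exact hS _ (S.max'_mem hne)
  rw [sum_congr rfl hwrap, sum_ite_eq', if_pos (S.max'_mem hne)]

end Seats

def seats (d : ℕ) (B : Finset ℕ) : Finset ℕ :=
  B.image (· % d)

section Move

variable {d : ℕ} {B : Finset ℕ}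

theorem mod_mem_seats {q : ℕ} (hq : q ∈ B) : q % d ∈ seats d B :=
  mem_image_of_mem _ hq

theorem lt_of_mem_seats (hd : 0 < d) {r : ℕ} (hr : r ∈ seats d B) : r < d := by
  obtain ⟨q, -, rfl⟩ := mem_image.1 hr
  exact Nat.mod_lt q hd

theorem exists_mem_seats_lt (hd : 0 < d) (hne : B.Nonempty) : ∃ r ∈ seats d B, r < d :=
  ⟨_, mod_mem_seats hne.choose_spec, Nat.mod_lt _ hd⟩

theorem sum_seats {M : Type*} [AddCommMonoid M] (hB : Set.InjOn (· % d) B) (f : ℕ → M) :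
    ∑ r ∈ seats d B, f r = ∑ q ∈ B, f (q % d) :=
  sum_image hB

variable (hd : 0 < d) (hB : Set.InjOn (· % d) B) (hne : B.Nonempty)
include hd hB hne

omit hB in
theorem nextPt_injOn_seats : Set.InjOn (nextPt d (seats d B)) B :=
  StrictMonoOn.injOn fun _ _ _ hq hpq =>
    nextPt_lt_nextPt (exists_mem_seats_lt hd hne) hpq (mod_mem_seats hq)

theorem sum_nextPt_div : ∑ q ∈ B, nextPt d (seats d B) q / d = ∑ q ∈ B, q / d + 1 := by
  have hS := exists_mem_seats_lt hd hne
  calc ∑ q ∈ B, nextPt d (seats d B) q / d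
      = ∑ q ∈ B, (nextPt d (seats d B) (q % d) / d + q / d) := by
        refine sum_congr rfl fun q _ => ?_
        rw [nextPt_eq_nextPt_mod_add hS, Nat.add_mul_div_right _ _ hd]
    _ = ∑ r ∈ seats d B, nextPt d (seats d B) r / d + ∑ q ∈ B, q / d := by
        rw [sum_add_distrib, sum_seats hB]
    _ = ∑ q ∈ B, q / d + 1 := by
        rw [sum_nextPt_div_eq_one (fun _ => lt_of_mem_seats hd) (hne.image _), add_comm]

theorem sum_comp_nextPt_mod {M : Type*} [AddCommMonoid M] (g : ℕ → M) :
    ∑ q ∈ B, g (nextPt d (seats d B) q % d) = ∑ q ∈ B, g (q % d) := by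
  have hS := exists_mem_seats_lt hd hne
  have hperm := image_nextPt_mod (S := seats d B) fun _ => lt_of_mem_seats hd
  calc ∑ q ∈ B, g (nextPt d (seats d B) q % d)
      = ∑ r ∈ seats d B, g (nextPt d (seats d B) r % d) := by
        rw [sum_seats hB]
        exact sum_congr rfl fun q _ => by rw [nextPt_mod hS]
    _ = ∑ r ∈ seats d B, g r := by
        conv_rhs => rw [← hperm]
        rw [sum_image (nextPt_mod_injOn fun _ => lt_of_mem_seats hd)]
    _ = ∑ q ∈ B, g (q % d) := sum_seats hB g

/-- The move permutes the seats of `B`, so only the extra turn of `sum_nextPt_div` survives. -/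
theorem sum_nextPt_sub_div {p : ℕ} (hp : ∀ q ∈ B, p ≤ q) :
    ∑ q ∈ B, (nextPt d (seats d B) q - p) / d = ∑ q ∈ B, (q - p) / d + 1 := by
  have hS := exists_mem_seats_lt hd hne
  have hmoved : ∑ q ∈ B, ((nextPt d (seats d B) q - p) / d + p / d
      + if nextPt d (seats d B) q % d < p % d then 1 else 0)
      = ∑ q ∈ B, nextPt d (seats d B) q / d :=
    sum_congr rfl fun q hq =>
      sub_div_add_div_add_ite hd ((hp q hq).trans (lt_nextPt hS q).le)
  have hfixed : ∑ q ∈ B, ((q - p) / d + p / d + if q % d < p % d then 1 else 0)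
      = ∑ q ∈ B, q / d :=
    sum_congr rfl fun q hq => sub_div_add_div_add_ite hd (hp q hq)
  have hseats := sum_comp_nextPt_mod hd hB hne fun r => if r < p % d then 1 else 0
  have hturns := sum_nextPt_div hd hB hne
  simp only [sum_add_distrib] at hmoved hfixed
  omega

end Move

section Union

variable {d : ℕ} {A B : Finset ℕ} (hd : 0 < d) (hinj : Set.InjOn (· % d) ↑(A ∪ B))
  (hAB : ∀ a ∈ A, ∀ b ∈ B, a < b) (hne : B.Nonempty)

include hinj hAB in
theorem mod_not_mem_seats {a : ℕ} (ha : a ∈ A) : a % d ∉ seats d B := by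
  intro h
  obtain ⟨b, hb, hba⟩ := mem_image.1 h
  exact (hAB a ha b hb).ne (hinj (mem_union_right A hb) (mem_union_left B ha) hba).symm

include hAB in
theorem disjoint_of_forall_lt : Disjoint A B :=
  disjoint_left.2 fun a ha hb => lt_irrefl a (hAB a ha a hb)

include hd hinj hAB hne

theorem disjoint_image_nextPt : Disjoint A (B.image (nextPt d (seats d B))) := by
  refine disjoint_left.2 fun a ha h => ?_
  obtain ⟨b, -, rfl⟩ := mem_image.1 h
  exact mod_not_mem_seats hinj hAB ha (nextPt_mod_mem (exists_mem_seats_lt hd hne) b)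

theorem card_union_image_nextPt :
    (A ∪ B.image (nextPt d (seats d B))).card = (A ∪ B).card := by
  rw [card_union_of_disjoint (disjoint_image_nextPt hd hinj hAB hne),
    card_union_of_disjoint (disjoint_of_forall_lt hAB),
    card_image_of_injOn (nextPt_injOn_seats hd hne)]

theorem injOn_mod_union_image_nextPt :
    Set.InjOn (· % d) ↑(A ∪ B.image (nextPt d (seats d B))) := by
  have hS := exists_mem_seats_lt hd hne
  have hBinj : Set.InjOn (· % d) B := hinj.mono (by simp)
  rw [coe_union, Set.injOn_union (disjoint_coe.2 (disjoint_image_nextPt hd hinj hAB hne)),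
    coe_image]
  refine ⟨hinj.mono (by simp), Set.InjOn.image_of_comp ?_, ?_⟩
  · have hcomm : (· % d) ∘ nextPt d (seats d B)
        = (fun r => nextPt d (seats d B) r % d) ∘ (· % d) :=
      funext (nextPt_mod hS)
    rw [hcomm]
    exact (nextPt_mod_injOn fun _ => lt_of_mem_seats hd).comp hBinj fun q => mod_mem_seats
  · rintro a ha _ ⟨b, -, rfl⟩ h
    exact mod_not_mem_seats hinj hAB ha (h ▸ nextPt_mod_mem hS b)

/-- Each point of `A` gains one turn towards the moved points, and all other pairs keep theirs. -/
theorem ptWeight_union_image_nextPt :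
    ptWeight d (A ∪ B.image (nextPt d (seats d B))) = ptWeight d (A ∪ B) + A.card := by
  set φ := nextPt d (seats d B)
  have hS := exists_mem_seats_lt hd hne
  have hdisj := disjoint_of_forall_lt hAB
  have hdisj' := disjoint_image_nextPt hd hinj hAB hne
  have hφ := nextPt_injOn_seats hd hne
  have hlow : ∀ p ∈ A, ∑ q ∈ A ∪ B.image φ, (q - p) / d = ∑ q ∈ A ∪ B, (q - p) / d + 1 := by
    intro p hp
    rw [sum_union hdisj', sum_union hdisj, sum_image hφ, add_assoc,
      sum_nextPt_sub_div hd (hinj.mono (by simp)) hne fun q hq => (hAB p hp q hq).le]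
  have hhigh : ∀ p ∈ B, ∑ q ∈ A ∪ B.image φ, (q - φ p) / d = ∑ q ∈ A ∪ B, (q - p) / d := by
    intro p hp
    rw [sum_union hdisj', sum_union hdisj, sum_image hφ]
    congr 1
    · refine sum_congr rfl fun q hq => ?_
      have hqp := hAB q hq p hp
      have hpφ : p < φ p := lt_nextPt hS p
      rw [Nat.sub_eq_zero_of_le (by omega), Nat.sub_eq_zero_of_le (by omega)]
    · exact sum_congr rfl fun q _ => nextPt_sub_nextPt_div hS (mod_mem_seats hp)
  calc ptWeight d (A ∪ B.image φ)
      = ∑ p ∈ A, ∑ q ∈ A ∪ B.image φ, (q - p) / d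
          + ∑ p ∈ B, ∑ q ∈ A ∪ B.image φ, (q - φ p) / d := by
        rw [ptWeight, sum_union hdisj', sum_image hφ]
    _ = ∑ p ∈ A, (∑ q ∈ A ∪ B, (q - p) / d + 1) + ∑ p ∈ B, ∑ q ∈ A ∪ B, (q - p) / d := by
        rw [sum_congr rfl hlow, sum_congr rfl hhigh]
    _ = ptWeight d (A ∪ B) + A.card := by
        rw [ptWeight, sum_union hdisj, sum_add_distrib, card_eq_sum_ones]
        ring

end Union

theorem gOp_eq_ofPts (d j : ℕ) (x : Fin d → ℕ) :
    gOp d j x = ofPts d (((sortedPts d x).take (j - 1)).toFinset ∪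
      ((sortedPts d x).drop (j - 1)).toFinset.image
        (nextPt d (seats d ((sortedPts d x).drop (j - 1)).toFinset))) := by
  have hmap : ∀ (f : ℕ → ℕ) (l : List ℕ), (l.map f).toFinset = l.toFinset.image f :=
    fun f l => by ext; simp
  funext i
  simp only [gOp, ofPts, seats, hmap]

end Spiral

open Spiral in
theorem statement8_general (d : ℕ) (hd : 1 ≤ d) (j : ℕ) (hjd : j ≤ d)
    (x : Fin d → ℕ) : weight (gOp d j x) = weight x + (j - 1) := by
  set L := sortedPts d x with hL
  have hsorted : L.Pairwise (· < ·) := (Finset.sortedLT_sort _).pairwise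
  have hlen : L.length = d := by rw [hL, sortedPts, Finset.length_sort, card_pts]
  set A := (L.take (j - 1)).toFinset
  set B := (L.drop (j - 1)).toFinset
  have hP : A ∪ B = pts d x := by
    rw [← List.toFinset_append, List.take_append_drop, hL, sortedPts, Finset.sort_toFinset]
  have hAB : ∀ a ∈ A, ∀ b ∈ B, a < b := fun a ha b hb =>
    hsorted.rel_of_mem_take_of_mem_drop (List.mem_toFinset.1 ha) (List.mem_toFinset.1 hb)
  have hA : A.card = j - 1 := by
    rw [List.toFinset_card_of_nodup (hsorted.nodup.sublist (List.take_sublist _ _)),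
      List.length_take]
    omega
  have hne : B.Nonempty := by
    rw [List.toFinset_nonempty_iff, ← List.length_pos_iff, List.length_drop]
    omega
  have hinj : Set.InjOn (· % d) ↑(A ∪ B) := hP ▸ mod_injOn_pts x
  have hcard : d ≤ (A ∪ B.image (nextPt d (seats d B))).card := by
    rw [card_union_image_nextPt hd hinj hAB hne, hP, card_pts]
  rw [gOp_eq_ofPts, weight_eq_ptWeight, weight_eq_ptWeight,
    pts_ofPts hd (injOn_mod_union_image_nextPt hd hinj hAB hne) hcard,
    ptWeight_union_image_nextPt hd hinj hAB hne, hP, hA]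

open Spiral in
/-- For every `x ∈ ℕ^d` and every `j ∈ [d]`, the weight satisfies
`W(g_j(x)) = W(x) + j − 1`. -/
theorem statement8 (d : ℕ) (hd : 1 ≤ d) (j : ℕ) (hj1 : 1 ≤ j) (hjd : j ≤ d)
    (x : Fin d → ℕ) : weight (gOp d j x) = weight x + (j - 1) :=
  statement8_general d hd j hjd x
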